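/- Define subsets of (ℤ/5)²: A10 = {(0,0),(0,1),(0,2),(1,4),(2,3),(3,0),(4,0)}, A01 = {(0,0),(3,3),(3,4),(4,3)}, A11 = {(0,0),(1,2),(2,1),(2,2),(3,3),(3,4),(4,3)}, Am11 = {(0,0)}. Then the only triple (χ1,χ2,χ3) with χ1 ∈ A10, χ2 ∈ A01, χ3 ∈ A11, χ3 - χ1 ∈ A01, χ3 - χ2 ∈ A10, χ2 - χ1 ∈ Am11 is χ1 = χ2 = χ3 = (0,0). -/
import Mathlib


/-- Acyclic set `A(K(1,0))` on the Beauville surface. -/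
def A10 : Set (ZMod 5 × ZMod 5) := {(0, 0), (0, 1), (0, 2), (1, 4), (2, 3), (3, 0), (4, 0)}
/-- Acyclic set `A(K(0,1))`. -/
def A01 : Set (ZMod 5 × ZMod 5) := {(0, 0), (3, 3), (3, 4), (4, 3)}
/-- Acyclic set `A(K(1,1))`. -/
def A11 : Set (ZMod 5 × ZMod 5) := {(0, 0), (1, 2), (2, 1), (2, 2), (3, 3), (3, 4), (4, 3)}
/-- Acyclic set `A(K(-1,1))`. -/
def Am11 : Set (ZMod 5 × ZMod 5) := {(0, 0)}

/-- The only triple `(χ1, χ2, χ3)` with `χ1 ∈ A10`, `χ2 ∈ A01`, `χ3 ∈ A11`,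
`χ3 - χ1 ∈ A01`, `χ3 - χ2 ∈ A10`, `χ2 - χ1 ∈ Am11` is the trivial one: the only
exceptional collection of numerical type `I₁` has trivial twists. -/
theorem stmt_14 (χ1 χ2 χ3 : ZMod 5 × ZMod 5) :
    (χ1 ∈ A10 ∧ χ2 ∈ A01 ∧ χ3 ∈ A11 ∧
     χ3 - χ1 ∈ A01 ∧ χ3 - χ2 ∈ A10 ∧ χ2 - χ1 ∈ Am11) ↔
    (χ1 = (0, 0) ∧ χ2 = (0, 0) ∧ χ3 = (0, 0)) := by
  simp only [A10, A01, A11, Am11, Set.mem_insert_iff, Set.mem_singleton_iff]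
  constructor
  · rintro ⟨h1, h2, h3, h4, h5, h6⟩
    rcases h1 with rfl|rfl|rfl|rfl|rfl|rfl|rfl <;>
      rcases h2 with rfl|rfl|rfl|rfl <;>
      rcases h3 with rfl|rfl|rfl|rfl|rfl|rfl|rfl <;>
      revert h4 h5 h6 <;> decide
  · rintro ⟨rfl, rfl, rfl⟩
    refine ⟨?_, ?_, ?_, ?_, ?_, ?_⟩ <;> decide
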